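/- arXiv:2204.13288 — 2 statements merged into one kernel-verified Lean document; each statement's English description precedes it below -/
import Mathlib

section
/- Let n ≥ 1 and suppose g is C^∞ on an open neighborhood W of (x̄₁, w̄) ∈ ℝ × ℝ^{n−1} such that: ∂₁²g(x̄₁,w̄) = 0; ∂₁³g(q) = 0 at every point q ∈ W with ∂₁²g(q) = 0; ∂₁⁴g(x̄₁,w̄) ≠ 0; and the singular set {q ∈ W : ∂₁²g(q) = 0} coincides with {q ∈ W : ∂₁³g(q) = 0} near (x̄₁,w̄). Then there exist an open neighborhood N of (x̄₁,w̄), an open neighborhood U₂ ∋ w̄ in ℝ^{n−1}, a C^∞ function f : U₂ → ℝ with f(w̄) = x̄₁ whose graph equals the singular set {(x₁,w) ∈ N : ∂₁²g(x₁,w) = 0} near (x̄₁,w̄), and C^∞ functions φ₁, φ₂ on N and k₁, k₂ on U₂ such that for all (x₁,w) ∈ N: P(x₁,w) = (x₁ − f(w))³·φ₁(x₁,w) + k₁(w) and Z(x₁,w) = (x₁ − f(w))³·φ₂(x₁,w) + k₂(w), with φ₁(x̄₁,w̄) ≠ 0. -/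
/-!
Statement 3: the division step in the proof of Theorem 3.6 (Malgrange division,
cubic form along the singular set).  Here `m` plays the role of `n - 1`,
`pd1` is the partial derivative in the first variable, `Pfun g = ∂g/∂x₁` and
`Zfun g = x₁ ∂g/∂x₁ - g`.
-/

/-- Partial derivative in the first variable. -/
noncomputable def pd1 {m : ℕ} (g : ℝ × (Fin m → ℝ) → ℝ) : ℝ × (Fin m → ℝ) → ℝ :=
  fun q => deriv (fun t => g (t, q.2)) q.1

/-- The affine flat coordinate `p₁` of the m-wavefront. -/
noncomputable def Pfun {m : ℕ} (g : ℝ × (Fin m → ℝ) → ℝ) : ℝ × (Fin m → ℝ) → ℝ :=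
  pd1 g

/-- The dual potential `z' = x₁ ∂g/∂x₁ - g` of the m-wavefront. -/
noncomputable def Zfun {m : ℕ} (g : ℝ × (Fin m → ℝ) → ℝ) : ℝ × (Fin m → ℝ) → ℝ :=
  fun q => q.1 * pd1 g q - g q

/-!
Near the base point the singular set `∂₁²g = 0` is the zero set of `∂₁³g`, and `∂₁⁴g ≠ 0`, so the
inverse function theorem for `(x₁, w) ↦ (∂₁³g, w)` exhibits it as the graph of a smooth `f`.
Along this graph the first two `x₁`-derivatives of `P = ∂₁g` (namely `∂₁²g`, `∂₁³g`) and of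
`Z = x₁ ∂₁g - g` (namely `x₁ ∂₁²g`, `∂₁²g + x₁ ∂₁³g`) vanish, so Taylor's formula in `x₁` around
`f w` with integral remainder performs the division explicitly: `P = k₁ + (x₁ - f w)³ φ₁` and
`Z = k₂ + (x₁ - f w)³ φ₂`, with `φ = ∫₀¹ (1 - t)²/2 · ∂₁³(P or Z)(f w + t (x₁ - f w), w) dt`.
After replacing `g` by a globally smooth function that agrees with it near the base point, these
integrals depend smoothly on `(x₁, w)`, and at the base point `φ₁ = ∂₁⁴g / 6 ≠ 0`.
-/

open Set Metric Filter Topology ContinuousLinearMap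
open scoped ContDiff

section ParametricIntegral

variable {E B : Type*} [NormedAddCommGroup E] [NormedSpace ℝ E]
  [NormedAddCommGroup B] [NormedSpace ℝ B] {F : E × ℝ → B}

theorem ContDiff.hasFDerivAt_parametric_intervalIntegral [ProperSpace E] (hF : ContDiff ℝ 1 F)
    (a b : ℝ) (x₀ : E) :
    HasFDerivAt (fun x => ∫ t in a..b, F (x, t))
      (∫ t in a..b, (fderiv ℝ F (x₀, t)).comp (inl ℝ E ℝ)) x₀ := by
  have hF' : Continuous fun p => (fderiv ℝ F p).comp (inl ℝ E ℝ) :=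
    (hF.continuous_fderiv one_ne_zero).clm_comp continuous_const
  obtain ⟨C, hC⟩ :
      ∃ C, ∀ p ∈ closedBall x₀ 1 ×ˢ uIcc a b, ‖(fderiv ℝ F p).comp (inl ℝ E ℝ)‖ ≤ C :=
    ((isCompact_closedBall _ _).prod isCompact_uIcc).exists_bound_of_continuousOn
      hF'.continuousOn
  refine intervalIntegral.hasFDerivAt_integral_of_dominated_of_fderiv_le
    (F := fun x t => F (x, t)) (F' := fun x t => (fderiv ℝ F (x, t)).comp (inl ℝ E ℝ))
    (bound := fun _ => C) (ball_mem_nhds x₀ one_pos)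
    (Eventually.of_forall fun x =>
      (hF.continuous.comp (Continuous.prodMk_right x)).aestronglyMeasurable)
    ((hF.continuous.comp (Continuous.prodMk_right x₀)).intervalIntegrable a b)
    (hF'.comp (Continuous.prodMk_right x₀)).aestronglyMeasurable ?_ intervalIntegrable_const ?_
  · exact Eventually.of_forall fun t ht x hx =>
      hC (x, t) ⟨ball_subset_closedBall hx, uIoc_subset_uIcc ht⟩
  · refine Eventually.of_forall fun t _ x _ => ?_
    exact ((hF.differentiable one_ne_zero) (x, t)).hasFDerivAt.comp x
      ((hasFDerivAt_id x).prodMk (hasFDerivAt_const t x))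

theorem ContDiff.parametric_intervalIntegral [FiniteDimensional ℝ E] [CompleteSpace B]
    (hF : ContDiff ℝ ∞ F) (a b : ℝ) :
    ContDiff ℝ ∞ fun x => ∫ t in a..b, F (x, t) := by
  refine contDiff_infty.2 fun n => ?_
  induction n generalizing F with
  | zero =>
    exact contDiff_zero.2 (intervalIntegral.continuous_parametric_intervalIntegral_of_continuous'
      (f := fun x t => F (x, t)) hF.continuous a b)
  | succ n ih =>
    have hF1 : ContDiff ℝ 1 F := hF.of_le (by simp)
    have hderiv (v : E) : (fun x => fderiv ℝ (fun x => ∫ t in a..b, F (x, t)) x v) =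
        fun x => ∫ t in a..b, fderiv ℝ F (x, t) (v, 0) := by
      ext x
      rw [(hF1.hasFDerivAt_parametric_intervalIntegral a b x).fderiv,
        ContinuousLinearMap.intervalIntegral_apply]
      · rfl
      · exact (((hF.continuous_fderiv (by simp)).clm_comp continuous_const).comp
          (Continuous.prodMk_right x)).intervalIntegrable a b
    rw [Nat.cast_succ, contDiff_succ_iff_fderiv_apply]
    refine ⟨fun x => (hF1.hasFDerivAt_parametric_intervalIntegral a b x).differentiableAt,
      by simp, fun v => ?_⟩
    rw [hderiv]
    exact ih ((hF.fderiv_right (m := ∞) (by simp)).clm_apply contDiff_const)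

end ParametricIntegral

theorem ContDiffOn.exists_contDiff_eqOn {E F : Type*} [NormedAddCommGroup E] [NormedSpace ℝ E]
    [HasContDiffBump E] [NormedAddCommGroup F] [NormedSpace ℝ F] {n : ℕ∞} {G : E → F}
    {W : Set E} (hW : IsOpen W) (hG : ContDiffOn ℝ n G W) {c : E} (hc : c ∈ W) :
    ∃ (O : Set E) (H : E → F), IsOpen O ∧ c ∈ O ∧ O ⊆ W ∧ ContDiff ℝ n H ∧ EqOn H G O := by
  obtain ⟨r, hr, hrW⟩ := nhds_basis_closedBall.mem_iff.1 (hW.mem_nhds hc)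
  let χ : ContDiffBump c := ⟨r / 2, r, half_pos hr, half_lt_self hr⟩
  refine ⟨ball c (r / 2), fun x => χ x • G x, isOpen_ball, mem_ball_self (half_pos hr),
    ball_subset_closedBall.trans ((closedBall_subset_closedBall (half_le_self hr.le)).trans hrW),
    contDiff_iff_contDiffAt.2 fun x => ?_,
    fun x hx => by simp [χ.one_of_mem_closedBall (ball_subset_closedBall hx)]⟩
  by_cases hx : x ∈ W
  · exact χ.contDiff.contDiffAt.smul (hG.contDiffAt (hW.mem_nhds hx))
  · have hχ : x ∉ tsupport χ := fun h => hx (hrW (χ.tsupport_eq ▸ h))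
    refine (contDiffAt_const (c := (0 : F))).congr_of_eventuallyEq ?_
    filter_upwards [(isClosed_tsupport _).isOpen_compl.mem_nhds hχ] with y hy
    simp [image_eq_zero_of_notMem_tsupport hy]

noncomputable def cubicRemainder (h : ℝ → ℝ) (a x : ℝ) : ℝ :=
  ∫ t in (0 : ℝ)..1, (1 - t) ^ 2 / 2 * h (a + t * (x - a))

theorem cubicRemainder_self (h : ℝ → ℝ) (a : ℝ) : cubicRemainder h a a = h a / 6 := by
  simp only [cubicRemainder, sub_self, mul_zero, add_zero]
  rw [intervalIntegral.integral_mul_const,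
    intervalIntegral.integral_comp_sub_left (fun t : ℝ => t ^ 2 / 2)]
  norm_num [intervalIntegral.integral_div, integral_pow]
  ring

theorem eq_cube_mul_cubicRemainder_add {h h₁ h₂ h₃ : ℝ → ℝ}
    (hh : ∀ y, HasDerivAt h (h₁ y) y) (hh₁ : ∀ y, HasDerivAt h₁ (h₂ y) y)
    (hh₂ : ∀ y, HasDerivAt h₂ (h₃ y) y) (hc : Continuous h₃) {a : ℝ} (ha₁ : h₁ a = 0)
    (ha₂ : h₂ a = 0) (x : ℝ) :
    h x = (x - a) ^ 3 * cubicRemainder h₃ a x + h a := by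
  set ℓ : ℝ → ℝ := fun s => a + s * (x - a)
  have hℓ (s : ℝ) : HasDerivAt ℓ (x - a) s :=
    (((hasDerivAt_id' s).mul_const (x - a)).const_add a).congr_deriv (one_mul _)
  have hv (s : ℝ) : HasDerivAt
      (fun s => h (ℓ s) + (1 - s) * (x - a) * h₁ (ℓ s) + (1 - s) ^ 2 / 2 * (x - a) ^ 2 * h₂ (ℓ s))
      ((x - a) ^ 3 * ((1 - s) ^ 2 / 2 * h₃ (ℓ s))) s := by
    have hlin : HasDerivAt (fun s : ℝ => 1 - s) (-1) s := by
      simpa using (hasDerivAt_id s).const_sub 1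
    have := (((hh _).comp s (hℓ s)).add
      (((hlin.mul_const (x - a)).mul ((hh₁ _).comp s (hℓ s))))).add
      (((hlin.pow 2).div_const 2).mul_const ((x - a) ^ 2) |>.mul ((hh₂ _).comp s (hℓ s)))
    exact this.congr_deriv (by simp only [Function.comp_apply, Pi.pow_apply]; push_cast; ring)
  have hint : IntervalIntegrable (fun s => (x - a) ^ 3 * ((1 - s) ^ 2 / 2 * h₃ (ℓ s)))
      MeasureTheory.volume 0 1 := by
    apply Continuous.intervalIntegrable
    fun_prop
  have := intervalIntegral.integral_eq_sub_of_hasDerivAt (fun s _ => hv s) hint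
  rw [intervalIntegral.integral_const_mul] at this
  simp only [ℓ, cubicRemainder] at this ⊢
  rw [this]
  simp [ha₁, ha₂]

theorem ContDiff.contDiffOn_cubicRemainder {E : Type*} [NormedAddCommGroup E] [NormedSpace ℝ E]
    [FiniteDimensional ℝ E] {K : ℝ × E → ℝ} (hK : ContDiff ℝ ∞ K) {f : E → ℝ} {V : Set E}
    (hf : ContDiffOn ℝ ∞ f V) :
    ContDiffOn ℝ ∞ (fun q : ℝ × E => cubicRemainder (fun s => K (s, q.2)) (f q.2) q.1)
      (Prod.snd ⁻¹' V) := by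
  have hI : ContDiff ℝ ∞ fun p : ℝ × (ℝ × E) =>
      ∫ t in (0 : ℝ)..1, (1 - t) ^ 2 / 2 * K (p.1 + t * (p.2.1 - p.1), p.2.2) :=
    ContDiff.parametric_intervalIntegral (F := fun pt : (ℝ × (ℝ × E)) × ℝ =>
      (1 - pt.2) ^ 2 / 2 * K (pt.1.1 + pt.2 * (pt.1.2.1 - pt.1.1), pt.1.2.2)) (by fun_prop) 0 1
  exact hI.comp_contDiffOn ((hf.comp contDiffOn_snd fun _ h => h).prodMk contDiffOn_id)

section ImplicitGraph

variable {E : Type*} [NormedAddCommGroup E] [NormedSpace ℝ E]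

theorem ContinuousLinearMap.apply_eq_mul_add (D : ℝ × E →L[ℝ] ℝ) (a : ℝ) (v : E) :
    D (a, v) = a * D (1, 0) + D (0, v) := by
  rw [← smul_eq_mul, ← map_smul, ← map_add, Prod.smul_mk, Prod.mk_add_mk]
  simp

noncomputable def ContinuousLinearMap.prodSndEquiv (D : ℝ × E →L[ℝ] ℝ) (hD : D (1, 0) ≠ 0) :
    (ℝ × E) ≃L[ℝ] (ℝ × E) :=
  ContinuousLinearEquiv.equivOfInverse (D.prod (snd ℝ ℝ E))
    (((D (1, 0))⁻¹ • (fst ℝ ℝ E - D.comp ((inr ℝ ℝ E).comp (snd ℝ ℝ E)))).prod (snd ℝ ℝ E))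
    (fun q => by
      ext
      · simp [D.apply_eq_mul_add q.1]
        field_simp
      · rfl)
    (fun q => by
      ext
      · simp [D.apply_eq_mul_add ((D (1, 0))⁻¹ * _)]
        field_simp
        ring
      · rfl)

theorem ContDiff.exists_zero_set_eq_graph [CompleteSpace E] {F : ℝ × E → ℝ}
    (hF : ContDiff ℝ ∞ F) {c : ℝ × E} (hFc : F c = 0) (hD : fderiv ℝ F c (1, 0) ≠ 0)
    {s : Set (ℝ × E)} (hs : s ∈ 𝓝 c) :
    ∃ (S : Set (ℝ × E)) (V : Set E) (f : E → ℝ), IsOpen S ∧ c ∈ S ∧ S ⊆ s ∧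
      IsOpen V ∧ ContDiffOn ℝ ∞ f V ∧ f c.2 = c.1 ∧ (∀ q ∈ S, q.2 ∈ V) ∧
      (∀ w ∈ V, (f w, w) ∈ S ∧ F (f w, w) = 0) ∧ ∀ q ∈ S, F q = 0 → f q.2 = q.1 := by
  set Φ : ℝ × E → ℝ × E := fun q => (F q, q.2)
  have hΦ : ContDiff ℝ ∞ Φ := hF.prodMk contDiff_snd
  have hΦ' (q : ℝ × E) (hq : fderiv ℝ F q (1, 0) ≠ 0) :
      HasFDerivAt Φ ((fderiv ℝ F q).prodSndEquiv hq : ℝ × E →L[ℝ] ℝ × E) q :=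
    ((hF.differentiable (by simp)) q).hasFDerivAt.prodMk hasFDerivAt_snd
  set Ψ := hΦ.contDiffAt.toOpenPartialHomeomorph Φ (hΦ' c hD) (by simp)
  have hΨ : (Ψ : ℝ × E → ℝ × E) = Φ := rfl
  have hcΨ : c ∈ Ψ.source := hΦ.contDiffAt.mem_toOpenPartialHomeomorph_source _ _
  set R := {q | fderiv ℝ F q (1, 0) ≠ 0} ∩ interior s ∩ Ψ.source
  have hR : IsOpen R := by
    refine (IsOpen.inter ?_ isOpen_interior).inter Ψ.open_source
    exact isOpen_ne_fun ((hF.continuous_fderiv (by simp)).clm_apply continuous_const)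
      continuous_const
  set V := {w : E | ((0 : ℝ), w) ∈ Ψ.target ∩ Ψ.symm ⁻¹' R}
  set f : E → ℝ := fun w => (Ψ.symm (0, w)).1
  have hgraph {w : E} (hw : w ∈ V) : Ψ.symm (0, w) = (f w, w) ∧ F (f w, w) = 0 := by
    have h := Ψ.right_inv hw.1
    rw [hΨ] at h
    have h2 : (Ψ.symm (0, w)).2 = w := congrArg Prod.snd h
    have hp : Ψ.symm (0, w) = (f w, w) := Prod.ext rfl h2
    exact ⟨hp, hp ▸ congrArg Prod.fst h⟩
  have hsymm {q : ℝ × E} (hq : q ∈ Ψ.source) (h0 : F q = 0) : Ψ.symm (0, q.2) = q := by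
    simpa [hΨ, Φ, h0] using Ψ.left_inv hq
  have hV : IsOpen V :=
    (Ψ.symm.isOpen_inter_preimage hR).preimage (continuous_const.prodMk continuous_id)
  have hcV : c.2 ∈ V := by
    have hΨc : Ψ c = (0, c.2) := by simp [hΨ, Φ, hFc]
    refine ⟨hΨc ▸ Ψ.map_source hcΨ, ?_⟩
    rw [mem_preimage, hsymm hcΨ hFc]
    exact ⟨⟨hD, mem_interior_iff_mem_nhds.2 hs⟩, hcΨ⟩
  refine ⟨R ∩ Prod.snd ⁻¹' V, V, f, hR.inter (hV.preimage continuous_snd),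
    ⟨⟨⟨hD, mem_interior_iff_mem_nhds.2 hs⟩, hcΨ⟩, hcV⟩, fun q hq => interior_subset hq.1.1.2,
    hV, ?_, by simp [f, hsymm hcΨ hFc], fun q hq => hq.2, ?_, ?_⟩
  · intro w hw
    have hsymm_smooth : ContDiffAt ℝ ∞ Ψ.symm (0, w) :=
      Ψ.contDiffAt_symm hw.1 (hΦ' _ hw.2.1.1) hΦ.contDiffAt
    exact (contDiffAt_fst.comp _
      (hsymm_smooth.comp _ (contDiffAt_const.prodMk contDiffAt_id))).contDiffWithinAt
  · exact fun w hw => ⟨⟨(hgraph hw).1 ▸ hw.2, hw⟩, (hgraph hw).2⟩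
  · exact fun q hq h0 => congrArg Prod.fst (hsymm hq.1.2 h0)

end ImplicitGraph

section Pd1

variable {m : ℕ} {F G : ℝ × (Fin m → ℝ) → ℝ}

theorem hasDerivAt_pd1 (hF : Differentiable ℝ F) (q : ℝ × (Fin m → ℝ)) :
    HasDerivAt (fun t => F (t, q.2)) (pd1 F q) q.1 :=
  (hF.comp (differentiable_id.prodMk (differentiable_const _))).differentiableAt.hasDerivAt

theorem pd1_eq_fderiv (hF : Differentiable ℝ F) (q : ℝ × (Fin m → ℝ)) :
    pd1 F q = fderiv ℝ F q (1, 0) := by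
  have hline : HasDerivAt (fun t : ℝ => (t, q.2)) ((1 : ℝ), (0 : Fin m → ℝ)) q.1 :=
    (hasDerivAt_id q.1).prodMk (hasDerivAt_const _ _)
  exact ((hF q).hasFDerivAt.comp_hasDerivAt q.1 hline).deriv

theorem ContDiff.pd1 (hF : ContDiff ℝ ∞ F) : ContDiff ℝ ∞ (pd1 F) := by
  have hF' : ContDiff ℝ ∞ fun q => fderiv ℝ F q (1, 0) :=
    (hF.fderiv_right (m := ∞) (by simp)).clm_apply contDiff_const
  simpa only [← pd1_eq_fderiv (hF.differentiable (by simp))] using hF'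

theorem pd1_eqOn {O : Set (ℝ × (Fin m → ℝ))} (hO : IsOpen O) (h : EqOn F G O) :
    EqOn (pd1 F) (pd1 G) O := fun q hq => by
  have hslice : (fun t => F (t, q.2)) =ᶠ[𝓝 q.1] fun t => G (t, q.2) := by
    have hcont : Continuous fun t : ℝ => (t, q.2) := continuous_id.prodMk continuous_const
    filter_upwards [hcont.continuousAt.preimage_mem_nhds (hO.mem_nhds hq)] with t ht
    exact h ht
  exact hslice.deriv_eq

theorem hasDerivAt_Zfun (hG : ContDiff ℝ ∞ G) (x : ℝ) (w : Fin m → ℝ) :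
    HasDerivAt (fun t => Zfun G (t, w)) (x * pd1 (pd1 G) (x, w)) x := by
  have h := ((hasDerivAt_id' x).mul (hasDerivAt_pd1 (hG.pd1.differentiable (by simp)) (x, w))).sub
    (hasDerivAt_pd1 (hG.differentiable (by simp)) (x, w))
  exact h.congr_deriv (by ring)

theorem Zfun_eqOn {O : Set (ℝ × (Fin m → ℝ))} (hO : IsOpen O)
    (h : EqOn F G O) : EqOn (Zfun F) (Zfun G) O := fun q hq => by
  simp only [Zfun, h hq, pd1_eqOn hO h hq]

theorem ContDiff.Zfun (hG : ContDiff ℝ ∞ G) : ContDiff ℝ ∞ (Zfun G) :=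
  (contDiff_fst.mul hG.pd1).sub hG

section Taylor

variable (hG : ContDiff ℝ ∞ G) {a : ℝ} {w : Fin m → ℝ}
  (h2 : pd1 (pd1 G) (a, w) = 0) (h3 : pd1 (pd1 (pd1 G)) (a, w) = 0)
include hG h2 h3

theorem pd1_eq_cube_mul_cubicRemainder_add (x : ℝ) :
    pd1 G (x, w) =
      (x - a) ^ 3 * cubicRemainder (fun s => pd1 (pd1 (pd1 (pd1 G))) (s, w)) a x + pd1 G (a, w) :=
  eq_cube_mul_cubicRemainder_add
    (fun y => hasDerivAt_pd1 (hG.pd1.differentiable (by simp)) (y, w))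
    (fun y => hasDerivAt_pd1 (hG.pd1.pd1.differentiable (by simp)) (y, w))
    (fun y => hasDerivAt_pd1 (hG.pd1.pd1.pd1.differentiable (by simp)) (y, w))
    (hG.pd1.pd1.pd1.pd1.continuous.comp (continuous_id.prodMk continuous_const)) h2 h3 x

theorem Zfun_eq_cube_mul_cubicRemainder_add (x : ℝ) :
    Zfun G (x, w) = (x - a) ^ 3 * cubicRemainder
      (fun s => 2 * pd1 (pd1 (pd1 G)) (s, w) + s * pd1 (pd1 (pd1 (pd1 G))) (s, w)) a x +
      Zfun G (a, w) := by
  have hd2 := hasDerivAt_pd1 (hG.pd1.pd1.differentiable (by simp))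
  have hd3 := hasDerivAt_pd1 (hG.pd1.pd1.pd1.differentiable (by simp))
  have hc3 := hG.pd1.pd1.pd1.continuous
  have hc4 := hG.pd1.pd1.pd1.pd1.continuous
  refine eq_cube_mul_cubicRemainder_add (h₁ := fun y => y * pd1 (pd1 G) (y, w))
    (h₂ := fun y => pd1 (pd1 G) (y, w) + y * pd1 (pd1 (pd1 G)) (y, w))
    (hasDerivAt_Zfun hG · w) (fun y => ?_) (fun y => ?_) (by fun_prop) (by simp [h2])
    (by simp [h2, h3]) x
  · exact ((hasDerivAt_id' y).mul (hd2 (y, w))).congr_deriv (by simp)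
  · exact ((hd2 (y, w)).add ((hasDerivAt_id' y).mul (hd3 (y, w)))).congr_deriv (by ring)

end Taylor

theorem exists_cubic_division (hG : ContDiff ℝ ∞ G)
    {f : (Fin m → ℝ) → ℝ} {U : Set (Fin m → ℝ)} (hf : ContDiffOn ℝ ∞ f U)
    (hf2 : ∀ w ∈ U, pd1 (pd1 G) (f w, w) = 0) (hf3 : ∀ w ∈ U, pd1 (pd1 (pd1 G)) (f w, w) = 0) :
    ∃ (φ₁ φ₂ : ℝ × (Fin m → ℝ) → ℝ) (k₁ k₂ : (Fin m → ℝ) → ℝ),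
      ContDiffOn ℝ ∞ φ₁ (Prod.snd ⁻¹' U) ∧ ContDiffOn ℝ ∞ φ₂ (Prod.snd ⁻¹' U) ∧
      ContDiffOn ℝ ∞ k₁ U ∧ ContDiffOn ℝ ∞ k₂ U ∧
      (∀ q ∈ Prod.snd ⁻¹' U, Pfun G q = (q.1 - f q.2) ^ 3 * φ₁ q + k₁ q.2 ∧
        Zfun G q = (q.1 - f q.2) ^ 3 * φ₂ q + k₂ q.2) ∧
      ∀ w ∈ U, φ₁ (f w, w) = pd1 (pd1 (pd1 (pd1 G))) (f w, w) / 6 := by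
  have hG3 := hG.pd1.pd1.pd1
  have hG4 := hG3.pd1
  refine ⟨fun q => cubicRemainder (fun s => pd1 (pd1 (pd1 (pd1 G))) (s, q.2)) (f q.2) q.1,
    fun q => cubicRemainder
      (fun s => 2 * pd1 (pd1 (pd1 G)) (s, q.2) + s * pd1 (pd1 (pd1 (pd1 G))) (s, q.2)) (f q.2) q.1,
    fun w => pd1 G (f w, w), fun w => Zfun G (f w, w), hG4.contDiffOn_cubicRemainder hf,
    ((contDiff_const.mul hG3).add (contDiff_fst.mul hG4)).contDiffOn_cubicRemainder hf,
    hG.pd1.comp_contDiffOn (hf.prodMk contDiffOn_id),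
    (hG.Zfun).comp_contDiffOn (hf.prodMk contDiffOn_id), ?_, fun w _ => cubicRemainder_self _ _⟩
  rintro ⟨x, w⟩ (hw : w ∈ U)
  exact ⟨pd1_eq_cube_mul_cubicRemainder_add hG (hf2 w hw) (hf3 w hw) x,
    Zfun_eq_cube_mul_cubicRemainder_add hG (hf2 w hw) (hf3 w hw) x⟩

end Pd1

theorem division_step_semidefinite_general {m : ℕ} (g : ℝ × (Fin m → ℝ) → ℝ)
    (xb : ℝ) (wb : Fin m → ℝ)
    (W : Set (ℝ × (Fin m → ℝ)))
    (hg : ContDiffOn ℝ (⊤ : ℕ∞) g W)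
    (h2 : pd1 (pd1 g) (xb, wb) = 0)
    (h4 : pd1 (pd1 (pd1 (pd1 g))) (xb, wb) ≠ 0)
    (hsing : ∃ W' : Set (ℝ × (Fin m → ℝ)), IsOpen W' ∧ (xb, wb) ∈ W' ∧ W' ⊆ W ∧
      {q | q ∈ W' ∧ pd1 (pd1 g) q = 0} = {q | q ∈ W' ∧ pd1 (pd1 (pd1 g)) q = 0}) :
    ∃ (N : Set (ℝ × (Fin m → ℝ))) (U₂ : Set (Fin m → ℝ)) (f : (Fin m → ℝ) → ℝ)
      (φ₁ φ₂ : ℝ × (Fin m → ℝ) → ℝ) (k₁ k₂ : (Fin m → ℝ) → ℝ),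
      IsOpen N ∧ (xb, wb) ∈ N ∧ N ⊆ W ∧
      IsOpen U₂ ∧ wb ∈ U₂ ∧
      ContDiffOn ℝ (⊤ : ℕ∞) f U₂ ∧ f wb = xb ∧
      {q | q ∈ N ∧ pd1 (pd1 g) q = 0} = {q | ∃ w ∈ U₂, q = (f w, w)} ∩ N ∧
      ContDiffOn ℝ (⊤ : ℕ∞) φ₁ N ∧ ContDiffOn ℝ (⊤ : ℕ∞) φ₂ N ∧
      ContDiffOn ℝ (⊤ : ℕ∞) k₁ U₂ ∧ ContDiffOn ℝ (⊤ : ℕ∞) k₂ U₂ ∧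
      (∀ q ∈ N, Pfun g q = (q.1 - f q.2) ^ 3 * φ₁ q + k₁ q.2 ∧
        Zfun g q = (q.1 - f q.2) ^ 3 * φ₂ q + k₂ q.2) ∧
      φ₁ (xb, wb) ≠ 0 := by
  obtain ⟨W', hW'open, hcW', hW'W, hsing⟩ := hsing
  obtain ⟨O, G, hO, hcO, hOW', hG, hGg⟩ := (hg.mono hW'W).exists_contDiff_eqOn hW'open hcW'
  have hG1 := pd1_eqOn hO hGg
  have hG2 := pd1_eqOn hO hG1
  have hG3 := pd1_eqOn hO hG2
  have hG4 := pd1_eqOn hO hG3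
  have hsingG {q} (hq : q ∈ O) : pd1 (pd1 G) q = 0 ↔ pd1 (pd1 (pd1 G)) q = 0 := by
    simpa [hG2 hq, hG3 hq, hOW' hq] using Set.ext_iff.1 hsing q
  have hD : fderiv ℝ (pd1 (pd1 (pd1 G))) (xb, wb) (1, 0) ≠ 0 := by
    rwa [← pd1_eq_fderiv (hG.pd1.pd1.pd1.differentiable (by simp)), hG4 hcO]
  obtain ⟨N, U₂, f, hN, hcN, hNO, hU₂, hf, hfc, hNU₂, hgraph, hzero⟩ :=
    hG.pd1.pd1.pd1.exists_zero_set_eq_graph ((hsingG hcO).1 (by rwa [hG2 hcO])) hD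
      (hO.mem_nhds hcO)
  obtain ⟨φ₁, φ₂, k₁, k₂, hφ₁, hφ₂, hk₁, hk₂, hdiv, hφ₁f⟩ := exists_cubic_division hG hf
    (fun w hw => (hsingG (hNO (hgraph w hw).1)).2 (hgraph w hw).2) fun w hw => (hgraph w hw).2
  refine ⟨N, U₂, f, φ₁, φ₂, k₁, k₂, hN, hcN, hNO.trans (hOW'.trans hW'W), hU₂, hNU₂ _ hcN, hf,
    hfc, ?_, hφ₁.mono hNU₂, hφ₂.mono hNU₂, hk₁, hk₂, fun q hq => ?_, ?_⟩
  · ext q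
    constructor
    · rintro ⟨hqN, hq⟩
      have hq3 := (hsingG (hNO hqN)).1 (by rwa [hG2 (hNO hqN)])
      exact ⟨⟨q.2, hNU₂ q hqN, Prod.ext (hzero q hqN hq3).symm rfl⟩, hqN⟩
    · rintro ⟨⟨w, hw, rfl⟩, hqN⟩
      exact ⟨hqN, by rw [← hG2 (hNO hqN)]; exact (hsingG (hNO hqN)).2 (hgraph w hw).2⟩
  · rw [Pfun, ← hG1 (hNO hq), ← Zfun_eqOn hO hGg (hNO hq)]
    exact hdiv q (hNU₂ q hq)
  · have hφ₁c := hφ₁f wb (hNU₂ _ hcN)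
    rw [show f wb = xb from hfc, hG4 hcO] at hφ₁c
    exact hφ₁c ▸ div_ne_zero h4 (by norm_num)

theorem division_step_semidefinite {m : ℕ} (g : ℝ × (Fin m → ℝ) → ℝ)
    (xb : ℝ) (wb : Fin m → ℝ)
    (W : Set (ℝ × (Fin m → ℝ))) (hWopen : IsOpen W) (hmem : (xb, wb) ∈ W)
    (hg : ContDiffOn ℝ (⊤ : ℕ∞) g W)
    (h2 : pd1 (pd1 g) (xb, wb) = 0)
    (h3 : ∀ q ∈ W, pd1 (pd1 g) q = 0 → pd1 (pd1 (pd1 g)) q = 0)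
    (h4 : pd1 (pd1 (pd1 (pd1 g))) (xb, wb) ≠ 0)
    (hsing : ∃ W' : Set (ℝ × (Fin m → ℝ)), IsOpen W' ∧ (xb, wb) ∈ W' ∧ W' ⊆ W ∧
      {q | q ∈ W' ∧ pd1 (pd1 g) q = 0} = {q | q ∈ W' ∧ pd1 (pd1 (pd1 g)) q = 0}) :
    ∃ (N : Set (ℝ × (Fin m → ℝ))) (U₂ : Set (Fin m → ℝ)) (f : (Fin m → ℝ) → ℝ)
      (φ₁ φ₂ : ℝ × (Fin m → ℝ) → ℝ) (k₁ k₂ : (Fin m → ℝ) → ℝ),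
      IsOpen N ∧ (xb, wb) ∈ N ∧ N ⊆ W ∧
      IsOpen U₂ ∧ wb ∈ U₂ ∧
      ContDiffOn ℝ (⊤ : ℕ∞) f U₂ ∧ f wb = xb ∧
      {q | q ∈ N ∧ pd1 (pd1 g) q = 0} = {q | ∃ w ∈ U₂, q = (f w, w)} ∩ N ∧
      ContDiffOn ℝ (⊤ : ℕ∞) φ₁ N ∧ ContDiffOn ℝ (⊤ : ℕ∞) φ₂ N ∧
      ContDiffOn ℝ (⊤ : ℕ∞) k₁ U₂ ∧ ContDiffOn ℝ (⊤ : ℕ∞) k₂ U₂ ∧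
      (∀ q ∈ N, Pfun g q = (q.1 - f q.2) ^ 3 * φ₁ q + k₁ q.2 ∧
        Zfun g q = (q.1 - f q.2) ^ 3 * φ₂ q + k₂ q.2) ∧
      φ₁ (xb, wb) ≠ 0 :=
  division_step_semidefinite_general g xb wb W hg h2 h4 hsing
end

section
/- For all indices s, t, u, v ∈ {1,…,n} and all r ∈ ℝ^n: if u ∈ I then D[u | s t v](r) = −∂_s∂_t∂_u∂_v g(r), and if u ∈ J then D[u | s t v](r) = 0. (This is the coordinate content of equation (dm2) in Theorem 4.2: τ(Φ(Z), ∇^{E′}_X∇^{E′}_Y Φ′(W)) = −½ D_M[Z | X Y W]; in particular the fourth derivative of a generating function is directly expressed by the canonical divergence.) -/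
/-!
For fixed `a`, the map `b ↦ D(a,b)` is `D(0,b)`, plus an affine function of `b`, plus
`-∑_{i ∈ I} a_i ∂_i g(b)`. Two or more derivatives in `b` annihilate the affine part, so for a
multi-index `w` of length at least two, `D[· | w](a,b)` is affine in `a`, with coefficient
`-∂_w ∂_i g(b)` on `a_i` for `i ∈ I` and no dependence on `a_j` for `j ∈ J`. One derivative in
`a_u` then leaves `-∂_w ∂_u g(b)` if `u ∈ I` and `0` otherwise; symmetry of second derivatives
reorders the indices.
-/

/-- Partial derivative in the k-th coordinate. -/
noncomputable def pder {n : ℕ} (k : Fin n) (g : (Fin n → ℝ) → ℝ) : (Fin n → ℝ) → ℝ :=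
  fun a => deriv (fun t => g (Function.update a k t)) (a k)

/-- The canonical divergence `D(a,b)` associated to a generating function `g`
and a partition `I ⊔ J` of the index set. -/
noncomputable def canDiv {n : ℕ} (I J : Finset (Fin n)) (g : (Fin n → ℝ) → ℝ)
    (a b : Fin n → ℝ) : ℝ :=
  g a - g b - ∑ j ∈ J, pder j g a * (a j - b j) + ∑ i ∈ I, pder i g b * (b i - a i)

/-- Partial derivative in the u-th coordinate of the first argument. -/
noncomputable def dFst {n : ℕ} (u : Fin n) (F : (Fin n → ℝ) → (Fin n → ℝ) → ℝ) :
    (Fin n → ℝ) → (Fin n → ℝ) → ℝ :=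
  fun a b => deriv (fun t => F (Function.update a u t) b) (a u)

/-- Partial derivative in the u-th coordinate of the second argument. -/
noncomputable def dSnd {n : ℕ} (u : Fin n) (F : (Fin n → ℝ) → (Fin n → ℝ) → ℝ) :
    (Fin n → ℝ) → (Fin n → ℝ) → ℝ :=
  fun a b => deriv (fun t => F a (Function.update b u t)) (b u)

open scoped ContDiff

section PartialDerivatives

variable {n : ℕ} {f g : (Fin n → ℝ) → ℝ}

theorem pder_eq_fderiv {a : Fin n → ℝ} (hf : DifferentiableAt ℝ f a) (k : Fin n) :
    pder k f a = fderiv ℝ f a (Pi.single k 1) :=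
  (hf.hasFDerivAt.comp_hasDerivAt_of_eq (a k) (hasDerivAt_update a k (a k))
    (Function.update_eq_self k a).symm).deriv

theorem pder_add (hf : Differentiable ℝ f) (hg : Differentiable ℝ g) (k : Fin n) :
    pder k (f + g) = pder k f + pder k g := by
  funext a
  simp only [Pi.add_apply, pder_eq_fderiv ((hf a).add (hg a)), pder_eq_fderiv (hf a),
    pder_eq_fderiv (hg a), fderiv_add (hf a) (hg a), add_apply]

theorem pder_sum {ι : Type*} {s : Finset ι} {F : ι → (Fin n → ℝ) → ℝ}
    (hF : ∀ i ∈ s, Differentiable ℝ (F i)) (k : Fin n) :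
    pder k (∑ i ∈ s, F i) = ∑ i ∈ s, pder k (F i) := by
  funext a
  have hFa : ∀ i ∈ s, DifferentiableAt ℝ (F i) a := fun i hi => hF i hi a
  rw [pder_eq_fderiv (Differentiable.sum hF a), fderiv_sum hFa, Finset.sum_apply,
    _root_.sum_apply]
  exact Finset.sum_congr rfl fun i hi => (pder_eq_fderiv (hFa i hi) k).symm

theorem pder_smul (c : ℝ) (f : (Fin n → ℝ) → ℝ) (k : Fin n) : pder k (c • f) = c • pder k f :=
  funext fun _ => deriv_const_mul_field c

theorem pder_const (c : ℝ) (k : Fin n) : pder k (fun _ => c) = 0 :=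
  funext fun _ => deriv_const _ c

theorem pder_affine (c : ℝ) (S : Finset (Fin n)) (w : Fin n → ℝ) (k : Fin n) :
    pder k (fun b => c + ∑ j ∈ S, w j * b j) = fun _ => if k ∈ S then w k else 0 := by
  funext b
  have hline : HasDerivAt (fun t => c + ∑ j ∈ S, w j * Function.update b k t j)
      (∑ j ∈ S, w j * (Pi.single k 1 : Fin n → ℝ) j) (b k) :=
    (HasDerivAt.fun_sum (u := S) fun j _ =>
      ((hasDerivAt_pi.1 (hasDerivAt_update b k (b k)) j).const_mul (w j))).const_add c
  simp [pder, hline.deriv, Pi.single_apply]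

theorem contDiff_pder (hf : ContDiff ℝ ∞ f) (k : Fin n) : ContDiff ℝ ∞ (pder k f) := by
  have hdiff : Differentiable ℝ f := hf.differentiable (by simp)
  rw [show pder k f = fun a => fderiv ℝ f a (Pi.single k 1) from
    funext fun a => pder_eq_fderiv (hdiff a) k]
  exact (hf.fderiv_right (m := ∞) (by simp)).clm_apply contDiff_const

theorem pder_comm (hf : ContDiff ℝ ∞ f) (j k : Fin n) :
    pder j (pder k f) = pder k (pder j f) := by
  have hdiff : Differentiable ℝ f := hf.differentiable (by simp)
  have hdiff' : Differentiable ℝ (fderiv ℝ f) :=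
    (hf.fderiv_right (m := ∞) (by simp)).differentiable (by simp)
  have hsecond : ∀ p q a, pder p (pder q f) a
      = fderiv ℝ (fderiv ℝ f) a (Pi.single p 1) (Pi.single q 1) := by
    intro p q a
    rw [pder_eq_fderiv ((contDiff_pder hf q).differentiable (by simp) a),
      show pder q f = fun x => fderiv ℝ f x (Pi.single q 1) from
        funext fun x => pder_eq_fderiv (hdiff x) q,
      fderiv_clm_apply (hdiff' a) (differentiableAt_const _)]
    simp
  funext a
  rw [hsecond, hsecond]
  exact (hf.contDiffAt.isSymmSndFDerivAt (by simp; exact WithTop.coe_le_coe.2 le_top)) _ _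

end PartialDerivatives

section IteratedPartialDerivatives

variable {n : ℕ} {f g : (Fin n → ℝ) → ℝ}

/-- Derivatives are taken in list order: `iteratedPder [v, t, s] f = pder s (pder t (pder v f))`. -/
noncomputable def iteratedPder (ks : List (Fin n)) (f : (Fin n → ℝ) → ℝ) : (Fin n → ℝ) → ℝ :=
  ks.foldl (fun f k => pder k f) f

theorem iteratedPder_cons (k : Fin n) (ks : List (Fin n)) (f : (Fin n → ℝ) → ℝ) :
    iteratedPder (k :: ks) f = iteratedPder ks (pder k f) :=
  rfl

theorem iteratedPder_add (hf : ContDiff ℝ ∞ f) (hg : ContDiff ℝ ∞ g) (ks : List (Fin n)) :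
    iteratedPder ks (f + g) = iteratedPder ks f + iteratedPder ks g := by
  induction ks generalizing f g with
  | nil => rfl
  | cons k ks ih =>
    rw [iteratedPder_cons, pder_add (hf.differentiable (by simp)) (hg.differentiable (by simp)),
      ih (contDiff_pder hf k) (contDiff_pder hg k)]
    rfl

theorem iteratedPder_smul (c : ℝ) (f : (Fin n → ℝ) → ℝ) (ks : List (Fin n)) :
    iteratedPder ks (c • f) = c • iteratedPder ks f := by
  induction ks generalizing f with
  | nil => rfl
  | cons k ks ih => rw [iteratedPder_cons, pder_smul, ih]; rfl

theorem iteratedPder_zero (ks : List (Fin n)) : iteratedPder ks (0 : (Fin n → ℝ) → ℝ) = 0 := by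
  simpa using iteratedPder_smul 0 0 ks

theorem iteratedPder_sum {ι : Type*} {s : Finset ι} {F : ι → (Fin n → ℝ) → ℝ}
    (hF : ∀ i ∈ s, ContDiff ℝ ∞ (F i)) (ks : List (Fin n)) :
    iteratedPder ks (∑ i ∈ s, F i) = ∑ i ∈ s, iteratedPder ks (F i) := by
  induction ks generalizing F with
  | nil => rfl
  | cons k ks ih =>
    rw [iteratedPder_cons, pder_sum (fun i hi => (hF i hi).differentiable (by simp)),
      ih (fun i hi => contDiff_pder (hF i hi) k)]
    rfl

end IteratedPartialDerivatives

section CanonicalDivergence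

variable {n : ℕ} {I J : Finset (Fin n)} {g : (Fin n → ℝ) → ℝ}

theorem canDiv_eq_canDiv_zero_add (a : Fin n → ℝ) :
    canDiv I J g a = canDiv I J g 0
      + (fun b => (g a - g 0 - ∑ j ∈ J, pder j g a * a j)
          + ∑ j ∈ J, (pder j g a - pder j g 0) * b j)
      + ∑ i ∈ I, (-a i) • pder i g := by
  funext b
  simp only [canDiv, Pi.add_apply, Finset.sum_apply, Pi.smul_apply, smul_eq_mul, Pi.zero_apply,
    mul_sub, sub_mul, mul_zero, Finset.sum_sub_distrib, Finset.sum_const_zero, neg_mul,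
    Finset.sum_neg_distrib, mul_comm (a _)]
  ring

theorem contDiff_canDiv (hg : ContDiff ℝ ∞ g) (a : Fin n → ℝ) : ContDiff ℝ ∞ (canDiv I J g a) := by
  have hpder := contDiff_pder hg
  unfold canDiv
  fun_prop

theorem iteratedPder_canDiv (hg : ContDiff ℝ ∞ g) (v t : Fin n) (ks : List (Fin n))
    (a : Fin n → ℝ) :
    iteratedPder (v :: t :: ks) (canDiv I J g a) = iteratedPder (v :: t :: ks) (canDiv I J g 0)
      + ∑ i ∈ I, (-a i) • iteratedPder (v :: t :: ks) (pder i g) := by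
  have hpder := contDiff_pder hg
  have hterm : ∀ i, ContDiff ℝ ∞ ((-a i) • pder i g) := fun i => (hpder i).const_smul (-a i)
  have hsum : ContDiff ℝ ∞ (∑ i ∈ I, (-a i) • pder i g) := by
    rw [Finset.sum_fn]
    exact ContDiff.sum fun i _ => hterm i
  have haffine : ∀ (c : ℝ) (w : Fin n → ℝ),
      iteratedPder (v :: t :: ks) (fun b => c + ∑ j ∈ J, w j * b j) = 0 := by
    intro c w
    rw [iteratedPder_cons, iteratedPder_cons, pder_affine, pder_const, iteratedPder_zero]
  rw [canDiv_eq_canDiv_zero_add a, iteratedPder_add _ hsum,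
    iteratedPder_add (contDiff_canDiv hg 0), haffine, add_zero,
    iteratedPder_sum fun i _ => hterm i]
  · simp only [iteratedPder_smul]
  · fun_prop
  · exact (contDiff_canDiv hg 0).add (by fun_prop)

theorem pder_iteratedPder_canDiv (hg : ContDiff ℝ ∞ g) (u v t : Fin n) (ks : List (Fin n))
    (a₀ b : Fin n → ℝ) :
    pder u (fun a => iteratedPder (v :: t :: ks) (canDiv I J g a) b) a₀
      = -(if u ∈ I then iteratedPder (v :: t :: ks) (pder u g) b else 0) := by
  have haffine : (fun a => iteratedPder (v :: t :: ks) (canDiv I J g a) b)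
      = fun a => iteratedPder (v :: t :: ks) (canDiv I J g 0) b
          + ∑ i ∈ I, -iteratedPder (v :: t :: ks) (pder i g) b * a i := by
    funext a
    rw [iteratedPder_canDiv hg]
    simp only [Pi.add_apply, Finset.sum_apply, Pi.smul_apply, smul_eq_mul, mul_neg, mul_comm]
  rw [haffine, pder_affine]
  split_ifs <;> simp

end CanonicalDivergence

theorem divergence_fourth_derivative_general {n : ℕ} (I J : Finset (Fin n))
    (hdisj : Disjoint I J)
    (g : (Fin n → ℝ) → ℝ) (hg : ContDiff ℝ (⊤ : ℕ∞) g)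
    (s t u v : Fin n) (r : Fin n → ℝ) :
    (u ∈ I → dFst u (dSnd s (dSnd t (dSnd v (canDiv I J g)))) r r
        = -(pder s (pder t (pder u (pder v g))) r)) ∧
    (u ∈ J → dFst u (dSnd s (dSnd t (dSnd v (canDiv I J g)))) r r = 0) := by
  have hpartials : dFst u (dSnd s (dSnd t (dSnd v (canDiv I J g)))) r r
      = pder u (fun a => iteratedPder [v, t, s] (canDiv I J g a) r) r := rfl
  rw [hpartials, pder_iteratedPder_canDiv hg]
  refine ⟨fun hu => ?_, fun hu => ?_⟩
  · rw [if_pos hu]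
    show -(pder s (pder t (pder v (pder u g))) r) = _
    rw [pder_comm hg v u]
  · rw [if_neg (Finset.disjoint_right.1 hdisj hu), neg_zero]

theorem divergence_fourth_derivative {n : ℕ} (I J : Finset (Fin n))
    (hdisj : Disjoint I J) (hunion : I ∪ J = Finset.univ)
    (g : (Fin n → ℝ) → ℝ) (hg : ContDiff ℝ (⊤ : ℕ∞) g)
    (s t u v : Fin n) (r : Fin n → ℝ) :
    (u ∈ I → dFst u (dSnd s (dSnd t (dSnd v (canDiv I J g)))) r r
        = -(pder s (pder t (pder u (pder v g))) r)) ∧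
    (u ∈ J → dFst u (dSnd s (dSnd t (dSnd v (canDiv I J g)))) r r = 0) :=
  divergence_fourth_derivative_general I J hdisj g hg s t u v r
end
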